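/- For every a ∈ (0,1], the function G_a is differentiable at every u ∈ (0,1) with u ≠ u₀(a), with G_a′(u) = e^{1−a} for u < u₀(a) and G_a′(u) = e^{1−a} − e^{−a}·e^{e^{−a}(1−u)} for u > u₀(a); moreover G_a′ is nondecreasing on (u₀(a), 1), and G_a′(u) > a/2 for all u ∈ (u₀(a), 1). -/

import Mathlib

/-!
On each side of `u₀(a)` the function `G_a` agrees near `u` with one of its two smooth branches,
so the derivative is that of the branch. The right-branch derivative
`e^{1-a} - e^{-a}·e^{e^{-a}(1-u)}` is nondecreasing because `u ↦ e^{e^{-a}(1-u)}` decreases.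
The choice of `u₀(a)` gives `e^{-a}(1 - u₀(a)) = 1 - a`, so for `u > u₀(a)` the derivative exceeds
`e^{1-a}(1 - e^{-a}) ≥ 1 - e^{-a} ≥ a/(1+a) ≥ a/2`.
-/

open Real

/-- The breakpoint `u₀(b) = 1 - (1-b)·e^b`. -/
noncomputable def u0 (b : ℝ) : ℝ := 1 - (1 - b) * Real.exp b

/-- The function `G_b : [0,1] → [0,1]`:  `G_b(u) = e^{1-b}·u` for `u ≤ u₀(b)` and
`G_b(u) = e^{e^{-b}(1-u)} - (1-u)·e^{1-b}` for `u > u₀(b)`. -/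
noncomputable def Gfun (b u : ℝ) : ℝ :=
  if u ≤ u0 b then Real.exp (1 - b) * u
  else Real.exp (Real.exp (-b) * (1 - u)) - (1 - u) * Real.exp (1 - b)

noncomputable def GfunDeriv (b u : ℝ) : ℝ := exp (1 - b) - exp (-b) * exp (exp (-b) * (1 - u))

lemma half_le_one_sub_exp_neg {a : ℝ} (ha₀ : 0 ≤ a) (ha₁ : a ≤ 1) : a / 2 ≤ 1 - exp (-a) := by
  have h : (1 + a) * exp (-a) ≤ 1 :=
    calc (1 + a) * exp (-a) ≤ exp a * exp (-a) := by
          gcongr; linarith [add_one_le_exp a]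
      _ = 1 := by rw [← exp_add, add_neg_cancel, exp_zero]
  nlinarith [exp_pos (-a)]

lemma exp_neg_mul_one_sub_u0 (b : ℝ) : exp (-b) * (1 - u0 b) = 1 - b := by
  rw [u0, sub_sub_cancel, mul_left_comm, ← exp_add, neg_add_cancel, exp_zero, mul_one]

lemma hasDerivAt_Gfun_of_lt_u0 {b u : ℝ} (hu : u < u0 b) :
    HasDerivAt (Gfun b) (exp (1 - b)) u := by
  have hG : Gfun b =ᶠ[nhds u] fun v => exp (1 - b) * v := by
    filter_upwards [Iio_mem_nhds hu] with v hv
    exact if_pos (le_of_lt hv)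
  simpa using ((hasDerivAt_id u).const_mul (exp (1 - b))).congr_of_eventuallyEq hG

lemma hasDerivAt_Gfun_of_u0_lt {b u : ℝ} (hu : u0 b < u) :
    HasDerivAt (Gfun b) (GfunDeriv b u) u := by
  have hG : Gfun b =ᶠ[nhds u] fun v => exp (exp (-b) * (1 - v)) - (1 - v) * exp (1 - b) := by
    filter_upwards [Ioi_mem_nhds hu] with v hv
    exact if_neg (not_le.mpr hv)
  have hlin := (hasDerivAt_id u).const_sub 1
  have hbranch := ((hlin.const_mul (exp (-b))).exp).sub (hlin.mul_const (exp (1 - b)))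
  refine (hbranch.congr_of_eventuallyEq hG).congr_deriv ?_
  rw [GfunDeriv, id]
  ring

lemma monotone_GfunDeriv (b : ℝ) : Monotone (GfunDeriv b) := by
  intro u v huv
  unfold GfunDeriv
  gcongr

lemma half_lt_GfunDeriv {b u : ℝ} (hb₀ : 0 ≤ b) (hb₁ : b ≤ 1) (hu : u0 b < u) :
    b / 2 < GfunDeriv b u := by
  have hexp : exp (-b) * (1 - u) < 1 - b := by
    rw [← exp_neg_mul_one_sub_u0 b]
    gcongr
  have hhalf := half_le_one_sub_exp_neg hb₀ hb₁
  calc b / 2 ≤ 1 - exp (-b) := hhalf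
    _ ≤ exp (1 - b) * (1 - exp (-b)) :=
        le_mul_of_one_le_left (by linarith) (one_le_exp (by linarith))
    _ = exp (1 - b) - exp (-b) * exp (1 - b) := by ring
    _ < GfunDeriv b u := by unfold GfunDeriv; gcongr

/-- For every `a ∈ (0,1]`, `G_a` is differentiable at every `u ∈ (0,1)` with `u ≠ u₀(a)`:
`G_a′(u) = e^{1-a}` for `u < u₀(a)` and `G_a′(u) = e^{1-a} − e^{-a}·e^{e^{-a}(1-u)}` for
`u > u₀(a)`; moreover this derivative is nondecreasing on `(u₀(a), 1)` and exceeds `a/2`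
there. -/
theorem Gfun_deriv (a : ℝ) (ha : a ∈ Set.Ioc (0 : ℝ) 1) :
    (∀ u ∈ Set.Ioo (0 : ℝ) 1, u < u0 a → HasDerivAt (Gfun a) (Real.exp (1 - a)) u) ∧
    (∀ u ∈ Set.Ioo (0 : ℝ) 1, u0 a < u →
      HasDerivAt (Gfun a)
        (Real.exp (1 - a) - Real.exp (-a) * Real.exp (Real.exp (-a) * (1 - u))) u) ∧
    MonotoneOn (fun u => Real.exp (1 - a) - Real.exp (-a) * Real.exp (Real.exp (-a) * (1 - u)))
      (Set.Ioo (u0 a) 1) ∧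
    (∀ u ∈ Set.Ioo (u0 a) 1,
      a / 2 < Real.exp (1 - a) - Real.exp (-a) * Real.exp (Real.exp (-a) * (1 - u))) :=
  ⟨fun _ _ hu => hasDerivAt_Gfun_of_lt_u0 hu,
    fun _ _ hu => hasDerivAt_Gfun_of_u0_lt hu,
    (monotone_GfunDeriv a).monotoneOn _,
    fun _ hu => half_lt_GfunDeriv ha.1.le ha.2 hu.1⟩
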